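/- arXiv:1808.09908 — 2 statements merged into one kernel-verified Lean document; each statement's English description precedes it below -/
import Mathlib

section
/- Let n ≥ d ≥ 2 and let H be a d-uniform hypergraph on n vertices that has at least one edge. Then Z₀(H) ≤ n − d. -/
/-! Common definitions: hypermatrices, hypergraphs, zero forcing, infection,
power domination zero forcing. -/

/-- A `d`-hypermatrix of dimension `n` over `F` is symmetric if its entries are
invariant under permutations of the indices. -/
def HMSymmetric {F : Type*} {n d : ℕ} (A : (Fin d → Fin n) → F) : Prop :=
  ∀ (i : Fin d → Fin n) (π : Equiv.Perm (Fin d)), A (i ∘ π) = A i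

/-- The space of null vectors of a `d`-hypermatrix: `x` is a null vector if
`∑ j, a_{i₁ ⋯ i_{d-1} j} x_j = 0` for every choice of indices `i₁, …, i_{d-1}`
(the last index is summed against `x`). -/
def nullSpace {F : Type*} [Field F] {n d : ℕ} (A : (Fin d → Fin n) → F) :
    Submodule F (Fin n → F) where
  carrier := {x | ∀ i : Fin d → Fin n,
    ∑ j : Fin n, A (fun k => if (k : ℕ) = d - 1 then j else i k) * x j = 0}
  add_mem' := by
    intro a b ha hb i
    simp only [Set.mem_setOf_eq] at ha hb
    simp only [Set.mem_setOf_eq, Pi.add_apply, mul_add, Finset.sum_add_distrib, ha i, hb i,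
      add_zero]
  zero_mem' := by
    intro i
    simp
  smul_mem' := by
    intro c x hx i
    simp only [Set.mem_setOf_eq] at hx
    simp only [Set.mem_setOf_eq, Pi.smul_apply, smul_eq_mul]
    have h : ∑ j : Fin n, A (fun k => if (k : ℕ) = d - 1 then j else i k) * (c * x j)
        = c * ∑ j : Fin n, A (fun k => if (k : ℕ) = d - 1 then j else i k) * x j := by
      rw [Finset.mul_sum]
      exact Finset.sum_congr rfl (fun j _ => by ring)
    rw [h, hx i, mul_zero]

/-- The nullity of a hypermatrix is the dimension of its space of null vectors. -/
noncomputable def hmNullity (F : Type*) [Field F] {n d : ℕ}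
    (A : (Fin d → Fin n) → F) : ℕ :=
  Module.finrank F (nullSpace A)

/-- A hypergraph on vertex type `V`: a set of hyperedges, each a finite set of
vertices. -/
structure ZHypergraph (V : Type*) where
  edges : Set (Finset V)

/-- A hypergraph is `d`-uniform if every edge has exactly `d` vertices. -/
def ZHypergraph.IsUniform {V : Type*} (H : ZHypergraph V) (d : ℕ) : Prop :=
  ∀ e ∈ H.edges, e.card = d

/-- A hypercubical `d`-hypermatrix is graphical if it is symmetric and the entries
indexed by non-distinct indices vanish. -/
def Graphical {F : Type*} [Field F] {n d : ℕ} (A : (Fin d → Fin n) → F) : Prop :=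
  HMSymmetric A ∧ ∀ i : Fin d → Fin n, ¬ Function.Injective i → A i = 0

/-- The hypergraph of a graphical `d`-hypermatrix: edges are the (distinct) index
sets of nonzero entries. -/
def hypergraphOf {F : Type*} [Field F] {n d : ℕ} (A : (Fin d → Fin n) → F) :
    ZHypergraph (Fin n) :=
  ⟨{e | ∃ i : Fin d → Fin n, Function.Injective i ∧ Finset.image i Finset.univ = e ∧ A i ≠ 0}⟩

/-- `A ∈ S(H)`: `A` is graphical and its hypergraph is `H`. -/
def InSFam {F : Type*} [Field F] {n d : ℕ} (H : ZHypergraph (Fin n))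
    (A : (Fin d → Fin n) → F) : Prop :=
  Graphical A ∧ hypergraphOf A = H

/-- The maximum nullity `M(H)` of a `d`-uniform hypergraph `H` over the field `F`. -/
noncomputable def maxNullity (F : Type*) [Field F] {n : ℕ} (d : ℕ)
    (H : ZHypergraph (Fin n)) : ℕ :=
  sSup {k | ∃ A : (Fin d → Fin n) → F, InSFam H A ∧ hmNullity F A = k}

/-- One application of the hypergraph color change rule: a set `S` of `d-1`
distinct vertices forces the white vertex `w` (i.e. `S ∪ {w}` is an edge and
`S ∪ {u}` being an edge for a white `u` implies `u = w`), turning the blue set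
`B` into `B'`. -/
def ZFStep {V : Type*} [DecidableEq V] (H : ZHypergraph V) (d : ℕ) (B B' : Set V) : Prop :=
  ∃ (S : Finset V) (w : V), S.card = d - 1 ∧ w ∉ S ∧ w ∉ B ∧
    insert w S ∈ H.edges ∧
    (∀ u : V, u ∉ B → insert u S ∈ H.edges → u = w) ∧
    B' = insert w B

/-- `B` is a hypergraph zero forcing set: starting from blue set `B`, repeated
applications of the hypergraph color change rule color every vertex blue. -/
def IsZFSet {V : Type*} [DecidableEq V] (H : ZHypergraph V) (d : ℕ) (B : Set V) : Prop :=
  Relation.ReflTransGen (ZFStep H d) B Set.univ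

/-- The hypergraph zero forcing number `Z₀(H)`: the minimum cardinality of a
hypergraph zero forcing set. -/
noncomputable def Z0 {V : Type*} [DecidableEq V] (H : ZHypergraph V) (d : ℕ) : ℕ :=
  sInf {k | ∃ B : Finset V, B.card = k ∧ IsZFSet H d (↑B : Set V)}

/-- One application of the infection rule: a nonempty set `S` of infected vertices
contained in an edge `e`, such that for every uninfected `u ∉ e` the set `S ∪ {u}`
is contained in no edge, infects all of `e`. -/
def InfStep {V : Type*} [DecidableEq V] (H : ZHypergraph V) (B B' : Set V) : Prop :=
  ∃ (S e : Finset V), e ∈ H.edges ∧ S.Nonempty ∧ (↑S : Set V) ⊆ B ∧ S ⊆ e ∧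
    (∀ u : V, u ∉ B → u ∉ e → ∀ e' ∈ H.edges, ¬ insert u S ⊆ e') ∧
    B' = B ∪ (↑e : Set V)

/-- `B` is an infection set: starting from `B` infected, repeated applications of
the infection rule infect every vertex. -/
def IsInfectionSet {V : Type*} [DecidableEq V] (H : ZHypergraph V) (B : Set V) : Prop :=
  Relation.ReflTransGen (InfStep H) B Set.univ

/-- The infection number `I(H)`. -/
noncomputable def infNum {V : Type*} [DecidableEq V] (H : ZHypergraph V) : ℕ :=
  sInf {k | ∃ B : Finset V, B.card = k ∧ IsInfectionSet H (↑B : Set V)}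

/-- `w` is a neighbor of `v` if some edge contains both (and `v ≠ w`). -/
def ZHypergraph.Neighbor {V : Type*} (H : ZHypergraph V) (v w : V) : Prop :=
  v ≠ w ∧ ∃ e ∈ H.edges, v ∈ e ∧ w ∈ e

/-- One application of the power domination color change rule: if all white
neighbors of a blue vertex `v` lie in a single edge containing `v`, they all
become blue. -/
def PDStep {V : Type*} (H : ZHypergraph V) (B B' : Set V) : Prop :=
  ∃ v ∈ B, ∃ e ∈ H.edges, v ∈ e ∧
    (∀ w : V, H.Neighbor v w → w ∉ B → w ∈ e) ∧
    B' = B ∪ {w | H.Neighbor v w ∧ w ∉ B}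

/-- `B` is a power domination zero forcing set. -/
def IsPDZFSet {V : Type*} (H : ZHypergraph V) (B : Set V) : Prop :=
  Relation.ReflTransGen (PDStep H) B Set.univ

/-- The power domination zero forcing number `Zpd(H)`. -/
noncomputable def Zpd {V : Type*} (H : ZHypergraph V) : ℕ :=
  sInf {k | ∃ B : Finset V, B.card = k ∧ IsPDZFSet H (↑B : Set V)}

/-- The complete `d`-uniform hypergraph on `Fin n`: all `d`-element subsets. -/
def completeHG (n d : ℕ) : ZHypergraph (Fin n) :=
  ⟨{e : Finset (Fin n) | e.card = d}⟩

/-- Two vertices are linked if some edge contains both. -/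
def ZHypergraph.Linked {V : Type*} (H : ZHypergraph V) (a b : V) : Prop :=
  ∃ e ∈ H.edges, a ∈ e ∧ b ∈ e

/-- A hypergraph is connected if any two vertices are joined by a path. -/
def ZHypergraph.Connected {V : Type*} (H : ZHypergraph V) : Prop :=
  ∀ u v : V, Relation.ReflTransGen H.Linked u v

/-- The connected component of a vertex `v`. -/
def componentSet {V : Type*} (H : ZHypergraph V) (v : V) : Set V :=
  {u | Relation.ReflTransGen H.Linked v u}

/-- A vertex is isolated if it belongs to no edge. -/
def ZHypergraph.IsIsolated {V : Type*} (H : ZHypergraph V) (v : V) : Prop :=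
  ∀ e ∈ H.edges, v ∉ e

/-- An interval `d`-uniform hypergraph on `Fin n` (vertices numbered `0,…,n-1`):
every edge consists of `d` consecutive vertices `{ℓ, ℓ+1, …, ℓ+d-1}`. -/
def IsIntervalHG {n : ℕ} (H : ZHypergraph (Fin n)) (d : ℕ) : Prop :=
  ∀ e ∈ H.edges, ∃ ℓ : ℕ, e.image Fin.val = Finset.Ico ℓ (ℓ + d)

/-- The edge set of the special interval hypergraph `SI(d,s)` on vertices
`0,…,sd` (0-indexed): left endpoints `(i-1)d` and `(i-1)d+1` for `i = 1,…,s`. -/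
def siEdges (n d s : ℕ) : Set (Finset (Fin n)) :=
  {e | ∃ i < s, e.image Fin.val = Finset.Ico (i * d) (i * d + d) ∨
       e.image Fin.val = Finset.Ico (i * d + 1) (i * d + 1 + d)}

/-- The component of `H` induced on `U` is (a copy of) the special interval
hypergraph `SI(d,s)` for some `s ≥ 1`: the vertices of `U` are `sd+1` consecutive
integers starting at `a`, and the edges of `H` contained in `U` are exactly the
shifted special-interval edges. -/
def IsSIComponent {n : ℕ} (H : ZHypergraph (Fin n)) (d : ℕ) (U : Set (Fin n)) : Prop :=
  ∃ a s : ℕ, 1 ≤ s ∧ Fin.val '' U = Set.Ico a (a + s * d + 1) ∧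
    ∀ e : Finset (Fin n),
      (e ∈ H.edges ∧ (↑e : Set (Fin n)) ⊆ U) ↔
      ∃ i < s, e.image Fin.val = Finset.Ico (a + i * d) (a + i * d + d) ∨
               e.image Fin.val = Finset.Ico (a + i * d + 1) (a + i * d + 1 + d)

/-- The set of values `{ℓ, ℓ+1, …, ℓ+d-1}` taken modulo `n` (a circular arc). -/
def arcEdge (n d ℓ : ℕ) : Finset ℕ :=
  (Finset.range d).image (fun k => (ℓ + k) % n)

/-- The edge set of the special circular-arc hypergraph `SCA(d,s)` on `n = sd`
vertices (0-indexed): first endpoints `(i-1)d` and `(i-1)d+1` for `i = 1,…,s`. -/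
def scaEdges (n d s : ℕ) : Set (Finset (Fin n)) :=
  {e | ∃ i < s, e.image Fin.val = arcEdge n d (i * d) ∨
       e.image Fin.val = arcEdge n d (i * d + 1)}

/-- The `t`-tight circular-arc `d`-hypergraph on `d+1` vertices: edges are the
arcs of length `d` with first endpoints `(i-1)(d-t)` (0-indexed) for
`i = 1, …, (d+1)/(d-t)`. -/
def tightCA (d t : ℕ) : ZHypergraph (Fin (d + 1)) :=
  ⟨{e | ∃ i < (d + 1) / (d - t), e.image Fin.val = arcEdge (d + 1) d (i * (d - t))}⟩

/-- Edge deletion `H - e`. -/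
def deleteEdge {V : Type*} (H : ZHypergraph V) (e : Finset V) : ZHypergraph V :=
  ⟨H.edges \ {e}⟩

/-- Vertex deletion `H - v`: the vertex set becomes `{u // u ≠ v}` and the edges
are the edges of `H` not containing `v`. -/
def deleteVertex {V : Type*} [DecidableEq V] (H : ZHypergraph V) (v : V) : ZHypergraph {u : V // u ≠ v} :=
  ⟨{e | e.image Subtype.val ∈ H.edges}⟩

/-- The Cartesian product of hypergraphs. -/
def cartProd {V V' : Type*} [DecidableEq V] [DecidableEq V']
    (H : ZHypergraph V) (H' : ZHypergraph V') : ZHypergraph (V × V') :=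
  ⟨{E | (∃ e ∈ H.edges, ∃ v' : V', E = e ×ˢ ({v'} : Finset V')) ∨
        (∃ v : V, ∃ e' ∈ H'.edges, E = ({v} : Finset V) ×ˢ e')}⟩

lemma force_aux {n d : ℕ} (hd : 2 ≤ d)
    (H : ZHypergraph (Fin n)) (hH : H.IsUniform d) (e : Finset (Fin n))
    (he : e ∈ H.edges) :
    ∀ (T : Finset (Fin n)), T ⊆ e →
      Relation.ReflTransGen (ZFStep H d) (↑(Finset.univ \ T) : Set (Fin n)) Set.univ := by
  intro T
  induction T using Finset.strongInduction with
  | _ T ih =>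
    intro hTe
    rcases T.eq_empty_or_nonempty with rfl | ⟨w, hw⟩
    · simp only [Finset.sdiff_empty, Finset.coe_univ]
      exact Relation.ReflTransGen.refl
    · have hwe : w ∈ e := hTe hw
      have hstep : ZFStep H d (↑(Finset.univ \ T)) (↑(Finset.univ \ T.erase w)) := by
        refine ⟨e.erase w, w, ?_, Finset.notMem_erase _ _, ?_, ?_, ?_, ?_⟩
        · rw [Finset.card_erase_of_mem hwe, hH e he]
        · simp [hw]
        · rw [Finset.insert_erase hwe]; exact he
        · intro u hu hedge
          have huT : u ∈ T := by
            simpa using hu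
          have hune : u ∉ e.erase w := by
            intro huS
            rw [Finset.insert_eq_self.2 huS] at hedge
            have := hH _ hedge
            rw [Finset.card_erase_of_mem hwe, hH e he] at this
            omega
          have hue := hTe huT
          by_contra hne
          exact hune (Finset.mem_erase.2 ⟨hne, hue⟩)
        · ext x
          simp only [Set.mem_insert_iff, Finset.coe_sdiff, Finset.coe_univ, Set.mem_diff,
            Set.mem_univ, true_and, Finset.mem_coe, Finset.mem_erase, not_and]
          tauto
      exact Relation.ReflTransGen.head hstep
        (ih (T.erase w) (Finset.erase_ssubset hw) ((Finset.erase_subset _ _).trans hTe))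

theorem stmt2 {n d : ℕ} (hd : 2 ≤ d) (hn : d ≤ n)
    (H : ZHypergraph (Fin n)) (hH : H.IsUniform d) (hne : H.edges.Nonempty) :
    Z0 H d ≤ n - d := by
  obtain ⟨e, he⟩ := hne
  have hcard : (Finset.univ \ e).card = n - d := by
    rw [Finset.card_sdiff_of_subset (Finset.subset_univ e), Finset.card_univ, Fintype.card_fin, hH e he]
  refine Nat.sInf_le ⟨Finset.univ \ e, hcard, ?_⟩
  exact force_aux hd H hH e he e (le_refl e)
end

section
/- Let H be a connected interval d-uniform hypergraph on n vertices (with d ≥ 2 and at least one edge). Then the singleton sets {1} and {n} are each hypergraph zero forcing sets for H. -/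
lemma my_mem_of_val_mem {n : ℕ} {e : Finset (Fin n)} {ℓ d : ℕ}
    (he : e.image Fin.val = Finset.Ico ℓ (ℓ + d)) {y : Fin n}
    (hy : ℓ ≤ (y : ℕ) ∧ (y : ℕ) < ℓ + d) : y ∈ e := by
  have h : (y : ℕ) ∈ e.image Fin.val := by rw [he]; exact Finset.mem_Ico.mpr hy
  obtain ⟨x, hx, hxy⟩ := Finset.mem_image.mp h
  exact (Fin.val_injective hxy) ▸ hx

lemma my_val_mem_of_mem {n : ℕ} {e : Finset (Fin n)} {ℓ d : ℕ}
    (he : e.image Fin.val = Finset.Ico ℓ (ℓ + d)) {y : Fin n} (hy : y ∈ e) :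
    ℓ ≤ (y : ℕ) ∧ (y : ℕ) < ℓ + d := by
  have h : (y : ℕ) ∈ Finset.Ico ℓ (ℓ + d) := he ▸ Finset.mem_image_of_mem _ hy
  exact Finset.mem_Ico.mp h

lemma my_card_of_interval {n : ℕ} {e : Finset (Fin n)} {ℓ d : ℕ}
    (he : e.image Fin.val = Finset.Ico ℓ (ℓ + d)) : e.card = d := by
  have h := Finset.card_image_of_injective e (Fin.val_injective (n := n))
  rw [he, Nat.card_Ico] at h
  omega

lemma my_crossing {n : ℕ} (H : ZHypergraph (Fin n)) (m : ℕ) {u v : Fin n}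
    (h : Relation.ReflTransGen H.Linked u v) (hu : (u : ℕ) < m) (hv : m ≤ (v : ℕ)) :
    ∃ e ∈ H.edges, ∃ a ∈ e, ∃ b ∈ e, (a : ℕ) < m ∧ m ≤ (b : ℕ) := by
  revert hv
  induction h with
  | refl => intro hv; omega
  | @tail x y h1 step ih =>
    intro hy
    by_cases hx : m ≤ (x : ℕ)
    · exact ih hx
    · push_neg at hx
      obtain ⟨e, he, hxe, hye⟩ := step
      exact ⟨e, he, x, hxe, y, hye, hx, hy⟩

lemma my_step_fwd {n d : ℕ} (hd : 2 ≤ d) (H : ZHypergraph (Fin n))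
    (hint : IsIntervalHG H d) (hconn : H.Connected) {m : ℕ} (hm1 : 1 ≤ m) (hmn : m < n) :
    ZFStep H d {v : Fin n | (v : ℕ) < m} {v : Fin n | (v : ℕ) < m + 1} := by
  obtain ⟨e, he, a, hae, b, hbe, ham, hbm⟩ :=
    my_crossing H m (hconn ⟨0, by omega⟩ ⟨m, hmn⟩) (show 0 < m by omega) (show m ≤ m by omega)
  obtain ⟨ℓ, hℓ⟩ := hint e he
  have hav := my_val_mem_of_mem hℓ hae
  have hbv := my_val_mem_of_mem hℓ hbe
  set w : Fin n := ⟨m, hmn⟩ with hwdef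
  have hwe : w ∈ e := my_mem_of_val_mem hℓ ⟨show ℓ ≤ m by omega, show m < ℓ + d by omega⟩
  have hcard : e.card = d := my_card_of_interval hℓ
  refine ⟨e.erase w, w, ?_, Finset.notMem_erase _ _, ?_, ?_, ?_, ?_⟩
  · rw [Finset.card_erase_of_mem hwe, hcard]
  · show ¬ ((w : ℕ) < m)
    show ¬ (m < m)
    omega
  · rw [Finset.insert_erase hwe]; exact he
  · intro u hu hins
    have hum : m ≤ (u : ℕ) := by
      simp only [Set.mem_setOf_eq] at hu; omega
    by_cases hus : u ∈ e.erase w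
    · exfalso
      rw [Finset.insert_eq_self.mpr hus] at hins
      obtain ⟨ℓ'', hℓ''⟩ := hint _ hins
      have h1 := my_card_of_interval hℓ''
      rw [Finset.card_erase_of_mem hwe, hcard] at h1
      omega
    · obtain ⟨ℓ', hℓ'⟩ := hint _ hins
      have hxn : ℓ < n := by omega
      have hxe : (⟨ℓ, hxn⟩ : Fin n) ∈ e :=
        my_mem_of_val_mem hℓ ⟨show ℓ ≤ ℓ by omega, show ℓ < ℓ + d by omega⟩
      have hxS : (⟨ℓ, hxn⟩ : Fin n) ∈ e.erase w := by
        refine Finset.mem_erase.mpr ⟨?_, hxe⟩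
        intro hq
        have : ℓ = m := congrArg Fin.val hq
        omega
      have hx' : ℓ' ≤ ℓ ∧ ℓ < ℓ' + d := my_val_mem_of_mem hℓ' (Finset.mem_insert_of_mem hxS)
      have hu' : ℓ' ≤ (u : ℕ) ∧ (u : ℕ) < ℓ' + d :=
        my_val_mem_of_mem hℓ' (Finset.mem_insert_self u _)
      have hue : u ∈ e := my_mem_of_val_mem hℓ ⟨by omega, by omega⟩
      by_contra hne'
      exact hus (Finset.mem_erase.mpr ⟨hne', hue⟩)
  · ext v
    simp only [Set.mem_insert_iff, Set.mem_setOf_eq, Fin.ext_iff]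
    show (v : ℕ) < m + 1 ↔ (v : ℕ) = m ∨ (v : ℕ) < m
    omega

lemma my_step_bwd {n d : ℕ} (hd : 2 ≤ d) (H : ZHypergraph (Fin n))
    (hint : IsIntervalHG H d) (hconn : H.Connected) {m : ℕ} (hm1 : 1 ≤ m) (hmn : m < n) :
    ZFStep H d {v : Fin n | m ≤ (v : ℕ)} {v : Fin n | m - 1 ≤ (v : ℕ)} := by
  obtain ⟨e, he, a, hae, b, hbe, ham, hbm⟩ :=
    my_crossing H m (hconn ⟨m - 1, by omega⟩ ⟨n - 1, by omega⟩)
      (show m - 1 < m by omega) (show m ≤ n - 1 by omega)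
  obtain ⟨ℓ, hℓ⟩ := hint e he
  have hav := my_val_mem_of_mem hℓ hae
  have hbv := my_val_mem_of_mem hℓ hbe
  set w : Fin n := ⟨m - 1, by omega⟩ with hwdef
  have hwe : w ∈ e := my_mem_of_val_mem hℓ ⟨show ℓ ≤ m - 1 by omega, show m - 1 < ℓ + d by omega⟩
  have hcard : e.card = d := my_card_of_interval hℓ
  have hxn : ℓ + d - 1 < n := by
    have h : (ℓ + d - 1) ∈ e.image Fin.val := by
      rw [hℓ]; exact Finset.mem_Ico.mpr ⟨by omega, by omega⟩
    obtain ⟨x, _, hx⟩ := Finset.mem_image.mp h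
    have := x.isLt; omega
  have hxe : (⟨ℓ + d - 1, hxn⟩ : Fin n) ∈ e :=
    my_mem_of_val_mem hℓ ⟨show ℓ ≤ ℓ + d - 1 by omega, show ℓ + d - 1 < ℓ + d by omega⟩
  refine ⟨e.erase w, w, ?_, Finset.notMem_erase _ _, ?_, ?_, ?_, ?_⟩
  · rw [Finset.card_erase_of_mem hwe, hcard]
  · show ¬ (m ≤ (w : ℕ))
    show ¬ (m ≤ m - 1)
    omega
  · rw [Finset.insert_erase hwe]; exact he
  · intro u hu hins
    have hum : (u : ℕ) < m := by
      simp only [Set.mem_setOf_eq] at hu; omega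
    by_cases hus : u ∈ e.erase w
    · exfalso
      rw [Finset.insert_eq_self.mpr hus] at hins
      obtain ⟨ℓ'', hℓ''⟩ := hint _ hins
      have h1 := my_card_of_interval hℓ''
      rw [Finset.card_erase_of_mem hwe, hcard] at h1
      omega
    · obtain ⟨ℓ', hℓ'⟩ := hint _ hins
      have hxS : (⟨ℓ + d - 1, hxn⟩ : Fin n) ∈ e.erase w := by
        refine Finset.mem_erase.mpr ⟨?_, hxe⟩
        intro hq
        have : ℓ + d - 1 = m - 1 := congrArg Fin.val hq
        omega
      have hx' : ℓ' ≤ ℓ + d - 1 ∧ ℓ + d - 1 < ℓ' + d :=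
        my_val_mem_of_mem hℓ' (Finset.mem_insert_of_mem hxS)
      have hu' : ℓ' ≤ (u : ℕ) ∧ (u : ℕ) < ℓ' + d :=
        my_val_mem_of_mem hℓ' (Finset.mem_insert_self u _)
      have hue : u ∈ e := my_mem_of_val_mem hℓ ⟨by omega, by omega⟩
      by_contra hne'
      exact hus (Finset.mem_erase.mpr ⟨hne', hue⟩)
  · ext v
    simp only [Set.mem_insert_iff, Set.mem_setOf_eq, Fin.ext_iff]
    show m - 1 ≤ (v : ℕ) ↔ (v : ℕ) = m - 1 ∨ m ≤ (v : ℕ)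
    omega

theorem stmt8 {n d : ℕ} (hd : 2 ≤ d) (H : ZHypergraph (Fin n))
    (hint : IsIntervalHG H d) (hconn : H.Connected) (hne : H.edges.Nonempty) :
    IsZFSet H d {v : Fin n | (v : ℕ) = 0} ∧ IsZFSet H d {v : Fin n | (v : ℕ) = n - 1} := by
  -- first, n ≥ d ≥ 2
  obtain ⟨e, he⟩ := hne
  obtain ⟨ℓ, hℓ⟩ := hint e he
  have hdn : ℓ + d ≤ n := by
    have h : (ℓ + d - 1) ∈ e.image Fin.val := by
      rw [hℓ]; exact Finset.mem_Ico.mpr ⟨by omega, by omega⟩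
    obtain ⟨x, _, hx⟩ := Finset.mem_image.mp h
    have := x.isLt; omega
  have hn2 : 2 ≤ n := by omega
  have key1 : ∀ k m, 1 ≤ m → n ≤ m + k →
      Relation.ReflTransGen (ZFStep H d) {v : Fin n | (v : ℕ) < m} Set.univ := by
    intro k
    induction k with
    | zero =>
      intro m hm hnm
      have huniv : {v : Fin n | (v : ℕ) < m} = Set.univ :=
        Set.eq_univ_iff_forall.mpr (fun v => lt_of_lt_of_le v.isLt (by omega))
      rw [huniv]
    | succ k ih =>
      intro m hm hnm
      by_cases hc : n ≤ m
      · have huniv : {v : Fin n | (v : ℕ) < m} = Set.univ :=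
          Set.eq_univ_iff_forall.mpr (fun v => lt_of_lt_of_le v.isLt hc)
        rw [huniv]
      · push_neg at hc
        exact Relation.ReflTransGen.head (my_step_fwd hd H hint hconn hm hc)
          (ih (m + 1) (by omega) (by omega))
  have key2 : ∀ k m, m ≤ k → m < n →
      Relation.ReflTransGen (ZFStep H d) {v : Fin n | m ≤ (v : ℕ)} Set.univ := by
    intro k
    induction k with
    | zero =>
      intro m hmk _
      have hm0 : m = 0 := by omega
      subst hm0
      have huniv : {v : Fin n | 0 ≤ (v : ℕ)} = Set.univ :=
        Set.eq_univ_iff_forall.mpr (fun v => Nat.zero_le _)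
      rw [huniv]
    | succ k ih =>
      intro m hmk hmn
      by_cases hc : m = 0
      · subst hc
        have huniv : {v : Fin n | 0 ≤ (v : ℕ)} = Set.univ :=
          Set.eq_univ_iff_forall.mpr (fun v => Nat.zero_le _)
        rw [huniv]
      · have h1 : 1 ≤ m := by omega
        exact Relation.ReflTransGen.head (my_step_bwd hd H hint hconn h1 hmn)
          (ih (m - 1) (by omega) (by omega))
  constructor
  · have hset : {v : Fin n | (v : ℕ) = 0} = {v : Fin n | (v : ℕ) < 1} := by
      ext v; simp only [Set.mem_setOf_eq]; omega
    rw [IsZFSet, hset]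
    exact key1 n 1 le_rfl (by omega)
  · have hset : {v : Fin n | (v : ℕ) = n - 1} = {v : Fin n | n - 1 ≤ (v : ℕ)} := by
      ext v; simp only [Set.mem_setOf_eq]; have := v.isLt; omega
    rw [IsZFSet, hset]
    exact key2 (n - 1) (n - 1) le_rfl (by omega)
end
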